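/- Let ω be a regular modulus of continuity, let Ω ⊂ ℂ be a bounded domain, and suppose τ : ℂ → ℂ is a bilipschitz homeomorphism with τ(𝔻) = Ω and τ(∂𝔻) = ∂Ω, where 𝔻 is the open unit disk. Define Λ(z) = τ(1/conj(τ⁻¹(z))) for z ∈ ℂ∖Ω (where conj denotes complex conjugation), and for f ∈ BMO_ω(Ω) set f̃ = f on Ω and f̃(z) = f(Λ(z)) for z ∈ ℂ∖Ω. Then f̃ ∈ BMO_ω(ℂ) ∩ L^∞(ℂ) and ‖f̃‖_{BMO_ω(ℂ)} ≤ C·(‖f‖_{BMO_ω(Ω)} + ‖f‖_{L^∞(Ω)}) for a constant C depending only on ω and the bilipschitz constant of τ. -/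

import Mathlib

open MeasureTheory Set Filter
open scoped Classical

noncomputable section

/-- The axis-parallel closed square with center `c` and side length `l`. -/
def Sq (c : ℂ) (l : ℝ) : Set ℂ :=
  {z : ℂ | |z.re - c.re| ≤ l / 2 ∧ |z.im - c.im| ≤ l / 2}

/-- Mean value of `f` over a set `S` with respect to planar Lebesgue measure. -/
def avgOn (f : ℂ → ℂ) (S : Set ℂ) : ℂ :=
  ((volume S).toReal)⁻¹ • ∫ z in S, f z

/-- `ω` is a modulus of continuity: increasing, continuous on `[0,∞)`,
vanishing at `0` and positive for positive arguments. -/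
def IsModulus (ω : ℝ → ℝ) : Prop :=
  ContinuousOn ω (Ici 0) ∧ MonotoneOn ω (Ici 0) ∧ ω 0 = 0 ∧ ∀ t : ℝ, 0 < t → 0 < ω t

/-- `ω` is Dini-smooth: `∫₀¹ ω(t)/t dt < ∞`. -/
def IsDini (ω : ℝ → ℝ) : Prop :=
  IntegrableOn (fun t => ω t / t) (Ioc (0:ℝ) 1)

/-- `ω` is regular: Dini-smooth and `ω(t)/t^ε` is almost decreasing
for some `ε ∈ (0,1)`. -/
def IsRegularModulus (ω : ℝ → ℝ) : Prop :=
  IsDini ω ∧ ∃ ε ∈ Ioo (0:ℝ) 1, ∃ C₀ : ℝ, 0 < C₀ ∧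
    ∀ t s : ℝ, 0 < s → s < t → ω t / t ^ ε ≤ C₀ * (ω s / s ^ ε)

/-- `N` is a `BMO_ω(ℂ)` bound for `g`: for every square `Q`,
`∫_Q |g - g_Q| ≤ N · ω(ℓ(Q)) · |Q|`. -/
def BMOBound (ω : ℝ → ℝ) (g : ℂ → ℂ) (N : ℝ) : Prop :=
  ∀ (c : ℂ) (l : ℝ), 0 < l →
    ∫ z in Sq c l, ‖g z - avgOn g (Sq c l)‖ ≤ N * (ω l * l ^ 2)

/-- `N` is a `BMO_ω(Ω)` bound for `f`: for every square `Q` meeting `Ω`,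
`∫_{Q∩Ω} |f - f_{Q|Ω}| ≤ N · ω(ℓ(Q)) · |Q|`. -/
def BMOBoundOn (ω : ℝ → ℝ) (Ω : Set ℂ) (f : ℂ → ℂ) (N : ℝ) : Prop :=
  ∀ (c : ℂ) (l : ℝ), 0 < l → (Sq c l ∩ Ω).Nonempty →
    ∫ z in Sq c l ∩ Ω, ‖f z - avgOn f (Sq c l ∩ Ω)‖ ≤ N * (ω l * l ^ 2)

/-- `Ω` is a bounded domain in `ℂ`. -/
def IsBoundedDomain (Ω : Set ℂ) : Prop :=
  IsOpen Ω ∧ IsConnected Ω ∧ Bornology.IsBounded Ω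

/-- `Ω ⊂ ℂ` has `C^{1,ω}`-smooth boundary: near each boundary point, after a
rotation by an integer multiple of `π/2`, `Ω` is the subgraph of a `C^{1,ω}`
function `φ` with `φ 0 = 0`. -/
def HasC1OmegaBoundary (ω : ℝ → ℝ) (Ω : Set ℂ) : Prop :=
  ∀ ζ ∈ frontier Ω, ∃ (r C : ℝ) (k : ℤ) (φ : ℝ → ℝ),
    0 < r ∧ 0 < C ∧ φ 0 = 0 ∧ Differentiable ℝ φ ∧
    (∀ s t : ℝ, |deriv φ s - deriv φ t| ≤ C * ω |s - t|) ∧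
    ((fun z : ℂ => Complex.I ^ k * (z - ζ)) '' Ω) ∩
        {z : ℂ | z.re ∈ Ioo (-r) r ∧ z.im ∈ Ioo (-r) r} =
      {z : ℂ | z.re ∈ Ioo (-r) r ∧ z.im ∈ Ioo (-r) (min (φ z.re) r)}

/-- `v` is the value at `z` of the restricted Beurling transform of `f` on `Ω`,
defined by the principal value
`B_Ω f(z) = -(1/π) lim_{ε→0⁺} ∫_{w ∈ Ω, |w-z| > ε} f(w)/(z-w)² dA(w)`. -/
def HasPVBeurling (Ω : Set ℂ) (f : ℂ → ℂ) (z v : ℂ) : Prop :=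
  Tendsto (fun ε : ℝ =>
      -(Real.pi : ℂ)⁻¹ * ∫ w in {w ∈ Ω | ε < ‖w - z‖}, f w / (z - w) ^ 2)
    (nhdsWithin 0 (Ioi 0)) (nhds v)

/-! ### Auxiliary lemmas -/

open scoped ENNReal NNReal

lemma lipCoords : LipschitzWith 1 (fun z : ℂ => (z.re, z.im)) := by
  apply LipschitzWith.of_dist_le_mul
  intro x y
  rw [Prod.dist_eq]
  simp only [NNReal.coe_one, one_mul]
  apply max_le
  · simpa [Real.dist_eq, Complex.dist_eq, Complex.sub_re] using Complex.abs_re_le_norm (x - y)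
  · simpa [Real.dist_eq, Complex.dist_eq, Complex.sub_im] using Complex.abs_im_le_norm (x - y)

lemma lipCoordsSymm : LipschitzWith 2 (fun p : ℝ × ℝ => Complex.mk p.1 p.2) := by
  apply LipschitzWith.of_dist_le_mul
  intro p q
  rw [Prod.dist_eq, Complex.dist_eq]
  have h1 : ‖Complex.mk p.1 p.2 - Complex.mk q.1 q.2‖ ≤
      |p.1 - q.1| + |p.2 - q.2| := by
    apply (Complex.norm_le_abs_re_add_abs_im _).trans
    simp [Complex.sub_re, Complex.sub_im]
  refine h1.trans ?_
  have := le_max_left (dist p.1 q.1) (dist p.2 q.2)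
  have := le_max_right (dist p.1 q.1) (dist p.2 q.2)
  simp only [Real.dist_eq] at *
  push_cast
  nlinarith [abs_nonneg (p.1 - q.1), abs_nonneg (p.2 - q.2)]

lemma vol_image_equiv (s : Set ℂ) (hs : MeasurableSet s) :
    volume ((fun z : ℂ => (z.re, z.im)) '' s) = volume s := by
  have him : (fun z : ℂ => (z.re, z.im)) '' s =
      Complex.measurableEquivRealProd.symm ⁻¹' s := by
    ext p
    constructor
    · rintro ⟨z, hz, rfl⟩
      simpa [Complex.measurableEquivRealProd_symm_apply] using hz
    · intro hp
      exact ⟨Complex.measurableEquivRealProd.symm p, hp, by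
        simp [Complex.measurableEquivRealProd_symm_apply]⟩
  rw [him]
  exact (Complex.volume_preserving_equiv_real_prod.symm _).measure_preimage
    hs.nullMeasurableSet

lemma volume_le_hausdorff : (volume : Measure ℂ) ≤ μH[2] := by
  rw [Measure.le_iff]
  intro s hs
  rw [← vol_image_equiv s hs, ← hausdorffMeasure_prod_real]
  have := lipCoords.hausdorffMeasure_image_le (by norm_num : (0:ℝ) ≤ 2) s
  simpa using this

lemma hausdorff_le_volume : (μH[2] : Measure ℂ) ≤ (4 : ℝ≥0∞) • volume := by
  rw [Measure.le_iff]
  intro s hs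
  have him : s = (fun p : ℝ × ℝ => Complex.mk p.1 p.2) ''
      ((fun z : ℂ => (z.re, z.im)) '' s) := by
    rw [Set.image_image]; simp
  calc μH[2] s = μH[2] ((fun p : ℝ × ℝ => Complex.mk p.1 p.2) ''
      ((fun z : ℂ => (z.re, z.im)) '' s)) := by rw [← him]
    _ ≤ (2:ℝ≥0) ^ (2:ℝ) * μH[2] ((fun z : ℂ => (z.re, z.im)) '' s) :=
        lipCoordsSymm.hausdorffMeasure_image_le (by norm_num) _
    _ = (2:ℝ≥0) ^ (2:ℝ) * volume ((fun z : ℂ => (z.re, z.im)) '' s) := by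
        rw [← hausdorffMeasure_prod_real]
    _ = (4 : ℝ≥0∞) * volume s := by
        rw [vol_image_equiv s hs]
        congr 1
        rw [show (2:ℝ)=((2:ℕ):ℝ) by norm_num, ENNReal.rpow_natCast]
        norm_num
    _ = ((4 : ℝ≥0∞) • volume) s := by simp

lemma lip_vol_image {c : ℝ} (hc : 0 ≤ c) {h : ℂ → ℂ} {s : Set ℂ}
    (H : ∀ x ∈ s, ∀ y ∈ s, dist (h x) (h y) ≤ c * dist x y) :
    volume (h '' s) ≤ ENNReal.ofReal (4 * c ^ 2) * volume s := by
  have hlip : LipschitzOnWith c.toNNReal h s := by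
    rw [lipschitzOnWith_iff_dist_le_mul]
    intro x hx y hy
    simpa [Real.coe_toNNReal _ hc] using H x hx y hy
  calc volume (h '' s) ≤ μH[2] (h '' s) := Measure.le_iff'.1 volume_le_hausdorff _
    _ ≤ (c.toNNReal : ℝ≥0∞) ^ (2:ℝ) * μH[2] s :=
        hlip.hausdorffMeasure_image_le (by norm_num)
    _ ≤ (c.toNNReal : ℝ≥0∞) ^ (2:ℝ) * ((4:ℝ≥0∞) • volume) s :=
        mul_le_mul_right (Measure.le_iff'.1 hausdorff_le_volume _) _
    _ = ENNReal.ofReal (4 * c ^ 2) * volume s := by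
        rw [Measure.smul_apply, smul_eq_mul, show (2:ℝ)=((2:ℕ):ℝ) by norm_num,
          ENNReal.rpow_natCast, ← mul_assoc]
        congr 1
        rw [ENNReal.ofReal_mul (by norm_num), mul_comm _ (4:ℝ≥0∞)]
        congr 1
        · norm_num
        · rw [sq, sq, ENNReal.ofReal_mul hc, ENNReal.ofReal]

lemma sq_eq (c : ℂ) (l : ℝ) : Sq c l =
    Complex.measurableEquivRealProd ⁻¹'
      (Icc (c.re - l/2) (c.re + l/2) ×ˢ Icc (c.im - l/2) (c.im + l/2)) := by
  ext z
  simp only [Sq, mem_setOf_eq, mem_preimage, Complex.measurableEquivRealProd_apply,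
    mem_prod, mem_Icc, abs_sub_le_iff]
  constructor <;> intro h <;> constructor <;> constructor <;> linarith [h.1.1, h.1.2, h.2.1, h.2.2]

lemma sq_measurable (c : ℂ) (l : ℝ) : MeasurableSet (Sq c l) := by
  rw [sq_eq]
  exact Complex.measurableEquivRealProd.measurable (measurableSet_Icc.prod measurableSet_Icc)

lemma sq_volume (c : ℂ) (l : ℝ) : volume (Sq c l) = ENNReal.ofReal l * ENNReal.ofReal l := by
  rw [sq_eq, Complex.volume_preserving_equiv_real_prod.measure_preimage
    ((measurableSet_Icc.prod measurableSet_Icc).nullMeasurableSet)]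
  rw [show (volume : Measure (ℝ × ℝ)) = (volume : Measure ℝ).prod volume from rfl]
  rw [Measure.prod_prod, Real.volume_Icc, Real.volume_Icc]
  have h : ∀ a : ℝ, a + l/2 - (a - l/2) = l := fun a => by ring
  rw [h, h]

lemma sq_volume_toReal (c : ℂ) (l : ℝ) (hl : 0 ≤ l) :
    (volume (Sq c l)).toReal = l ^ 2 := by
  rw [sq_volume c l, ← ENNReal.ofReal_mul hl, ENNReal.toReal_ofReal (by positivity), sq]

lemma mem_sq_dist {z c : ℂ} {l : ℝ} (h : z ∈ Sq c l) : ‖z - c‖ ≤ l := by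
  apply (Complex.norm_le_abs_re_add_abs_im _).trans
  simp only [Complex.sub_re, Complex.sub_im]
  obtain ⟨h1, h2⟩ := h
  linarith

lemma sq_of_dist {z c : ℂ} {l : ℝ} (h : ‖z - c‖ ≤ l) : z ∈ Sq c (2 * l) := by
  constructor
  · have := Complex.abs_re_le_norm (z - c); simp only [Complex.sub_re] at this; linarith
  · have := Complex.abs_im_le_norm (z - c); simp only [Complex.sub_im] at this; linarith

lemma sq_subset_sq {c : ℂ} {l l' : ℝ} (h : l ≤ l') : Sq c l ⊆ Sq c l' := by
  intro z hz
  exact ⟨hz.1.trans (by linarith), hz.2.trans (by linarith)⟩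

lemma self_mem_sq {c : ℂ} {l : ℝ} (hl : 0 ≤ l) : c ∈ Sq c l := by
  constructor <;> simp [abs_of_nonneg] <;> linarith

lemma avg_replace {S : Set ℂ} (h0 : volume S ≠ 0) (hfin : volume S ≠ ⊤)
    {φ : ℂ → ℂ} (hφ : AEMeasurable φ (volume.restrict S)) (a : ℂ) :
    ∫⁻ z in S, ENNReal.ofReal (‖φ z - avgOn φ S‖) ≤
      2 * ∫⁻ z in S, ENNReal.ofReal (‖φ z - a‖) := by
  set I := ∫⁻ z in S, ENNReal.ofReal (‖φ z - a‖) with hIdef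
  by_cases hI : I = ⊤
  · rw [hI]; simp
  have habs : ∀ (ψ : ℂ → ℂ) (z : ℂ), ENNReal.ofReal (‖ψ z‖) = ‖ψ z‖₊ := by
    intro ψ z
    exact ofReal_norm _
  have hmeas_sub : AEMeasurable (fun z => φ z - a) (volume.restrict S) := hφ.sub aemeasurable_const
  have hint : IntegrableOn (fun z => φ z - a) S := by
    constructor
    · exact hmeas_sub.aestronglyMeasurable
    · rw [hasFiniteIntegral_iff_norm]
      have : ∀ z : ℂ, ENNReal.ofReal ‖φ z - a‖ = ENNReal.ofReal (‖φ z - a‖) := by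
        intro z; rfl
      exact lt_of_le_of_ne le_top hI
  have hconst : IntegrableOn (fun _ : ℂ => a) S := integrableOn_const hfin
  have hφint : IntegrableOn φ S := by
    have h2 := hint.add hconst
    have h3 : ((fun z => φ z - a) + fun _ => a) = φ := by funext z; simp
    rwa [h3] at h2
  set v := (volume S).toReal with hv
  have hvpos : 0 < v := ENNReal.toReal_pos h0 hfin
  have hvol : volume S = ENNReal.ofReal v := by rw [hv, ENNReal.ofReal_toReal hfin]
  have havg : avgOn φ S - a = v⁻¹ • ∫ z in S, (φ z - a) := by
    rw [integral_sub hφint hconst, setIntegral_const, avgOn, smul_sub, measureReal_def, ← hv,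
      smul_smul, inv_mul_cancel₀ hvpos.ne', one_smul]
  have hnorm : ‖avgOn φ S - a‖ ≤ v⁻¹ * I.toReal := by
    rw [havg, norm_smul]
    have h1 : ‖∫ z in S, (φ z - a)‖ ≤ ∫ z in S, ‖φ z - a‖ := norm_integral_le_integral_norm _
    have h2 : ∫ z in S, ‖φ z - a‖ = I.toReal := by
      rw [hIdef, integral_norm_eq_lintegral_enorm hmeas_sub.aestronglyMeasurable]
      congr 1
      apply lintegral_congr
      intro z
      exact (habs (fun z => φ z - a) z).symm
    calc ‖v⁻¹‖ * ‖∫ z in S, (φ z - a)‖ ≤ ‖v⁻¹‖ * I.toReal := by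
          apply mul_le_mul_of_nonneg_left _ (norm_nonneg _)
          rw [← h2]; exact h1
      _ = v⁻¹ * I.toReal := by rw [Real.norm_eq_abs, abs_of_nonneg (by positivity)]
  calc ∫⁻ z in S, ENNReal.ofReal (‖φ z - avgOn φ S‖)
      ≤ ∫⁻ z in S, (ENNReal.ofReal (‖φ z - a‖)
          + ENNReal.ofReal (‖avgOn φ S - a‖)) := by
        apply lintegral_mono
        intro z
        dsimp only
        rw [← ENNReal.ofReal_add (by positivity) (by positivity)]
        apply ENNReal.ofReal_le_ofReal
        calc ‖φ z - avgOn φ S‖ ≤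
            ‖φ z - a‖ + ‖a - avgOn φ S‖ :=
              norm_sub_le_norm_sub_add_norm_sub (φ z) a (avgOn φ S)
          _ = ‖φ z - a‖ + ‖avgOn φ S - a‖ := by
              rw [norm_sub_rev a]
    _ = I + ENNReal.ofReal (‖avgOn φ S - a‖) * volume S := by
        rw [lintegral_add_right _ measurable_const, lintegral_const,
          Measure.restrict_apply MeasurableSet.univ, univ_inter]
    _ ≤ I + I := by
        apply add_le_add_right
        calc ENNReal.ofReal (‖avgOn φ S - a‖) * volume S
            ≤ ENNReal.ofReal (v⁻¹ * I.toReal) * volume S :=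
              mul_le_mul_left (ENNReal.ofReal_le_ofReal hnorm) _
          _ = (ENNReal.ofReal v⁻¹ * I) * ENNReal.ofReal v := by
              rw [hvol, ENNReal.ofReal_mul (by positivity), ENNReal.ofReal_toReal hI]
          _ = I := by
              rw [mul_comm _ I, mul_assoc, ← ENNReal.ofReal_mul (by positivity),
                inv_mul_cancel₀ hvpos.ne', ENNReal.ofReal_one, mul_one]
    _ = 2 * I := by ring

lemma omega_scale {ω : ℝ → ℝ} (hmod : IsModulus ω) (hreg : IsRegularModulus ω) :
    ∃ C₁ : ℝ, 1 ≤ C₁ ∧ ∀ k l : ℝ, 1 ≤ k → 0 < l → ω (k * l) ≤ C₁ * k * ω l := by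
  obtain ⟨-, ε, hε, C₀, hC₀pos, hC₀⟩ := hreg
  refine ⟨max C₀ 1, le_max_right _ _, ?_⟩
  intro k l hk hl
  have hωl : 0 < ω l := hmod.2.2.2 l hl
  rcases eq_or_lt_of_le hk with h1 | h1
  · rw [← h1, one_mul]
    nlinarith [le_max_right C₀ (1:ℝ)]
  · have hkl : l < k * l := by nlinarith
    have h := hC₀ (k * l) l hl hkl
    have hklpos : 0 < k * l := lt_trans hl hkl
    have hP : (0:ℝ) < (k * l) ^ ε := Real.rpow_pos_of_pos hklpos ε
    have hQ : (0:ℝ) < l ^ ε := Real.rpow_pos_of_pos hl ε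
    rw [div_le_iff₀ hP] at h
    have hsplit : (k * l) ^ ε = k ^ ε * l ^ ε :=
      Real.mul_rpow (by linarith) hl.le
    have hkε : k ^ ε ≤ k := by
      calc k ^ ε ≤ k ^ (1:ℝ) :=
        Real.rpow_le_rpow_of_exponent_le hk hε.2.le
      _ = k := Real.rpow_one k
    calc ω (k * l) ≤ C₀ * (ω l / l ^ ε) * (k ^ ε * l ^ ε) := by rw [← hsplit]; exact h
      _ = C₀ * ω l * k ^ ε := by field_simp
      _ ≤ C₀ * ω l * k := by nlinarith [mul_pos hC₀pos hωl]
      _ = C₀ * k * ω l := by ring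
      _ ≤ max C₀ 1 * k * ω l := by
          have h2 : C₀ ≤ max C₀ 1 := le_max_left _ _
          have h3 : (0:ℝ) < k := by linarith
          nlinarith [mul_nonneg (sub_nonneg.2 h2) (mul_pos h3 hωl).le]

lemma inv_le_inv_aux {x y : ℝ} (hx : 0 < x) (hxy : x ≤ y) : y⁻¹ ≤ x⁻¹ := by
  rw [← one_div, ← one_div]
  exact one_div_le_one_div_of_le hx hxy

lemma sq_convex (c : ℂ) (l : ℝ) : Convex ℝ (Sq c l) := by
  intro z hz w hw a b ha hb hab
  have hre : (a • z + b • w).re - c.re = a * (z.re - c.re) + b * (w.re - c.re) := by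
    simp only [Complex.add_re, Complex.real_smul, Complex.mul_re, Complex.ofReal_re,
      Complex.ofReal_im]
    linear_combination c.re * hab
  have him : (a • z + b • w).im - c.im = a * (z.im - c.im) + b * (w.im - c.im) := by
    simp only [Complex.add_im, Complex.real_smul, Complex.mul_im, Complex.ofReal_re,
      Complex.ofReal_im]
    linear_combination c.im * hab
  constructor
  · rw [hre]
    calc |a * (z.re - c.re) + b * (w.re - c.re)| ≤
        |a * (z.re - c.re)| + |b * (w.re - c.re)| := abs_add_le _ _
      _ = a * |z.re - c.re| + b * |w.re - c.re| := by
          rw [abs_mul, abs_mul, abs_of_nonneg ha, abs_of_nonneg hb]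
      _ ≤ a * (l/2) + b * (l/2) := by
          apply add_le_add
          · exact mul_le_mul_of_nonneg_left hz.1 ha
          · exact mul_le_mul_of_nonneg_left hw.1 hb
      _ = l / 2 := by rw [← add_mul, hab, one_mul]
  · rw [him]
    calc |a * (z.im - c.im) + b * (w.im - c.im)| ≤
        |a * (z.im - c.im)| + |b * (w.im - c.im)| := abs_add_le _ _
      _ = a * |z.im - c.im| + b * |w.im - c.im| := by
          rw [abs_mul, abs_mul, abs_of_nonneg ha, abs_of_nonneg hb]
      _ ≤ a * (l/2) + b * (l/2) := by
          apply add_le_add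
          · exact mul_le_mul_of_nonneg_left hz.2 ha
          · exact mul_le_mul_of_nonneg_left hw.2 hb
      _ = l / 2 := by rw [← add_mul, hab, one_mul]

set_option maxHeartbeats 1000000 in
/-- Lemma `l_ext`. Extension from `BMO_ω(Ω)` to `BMO_ω(ℂ)` via the
reflection `Λ(z) = τ(1/conj(τ⁻¹(z)))` associated with a bilipschitz map `τ` sending
the unit disk onto `Ω`. The constant depends only on `ω` and the bilipschitz
constant of `τ`. -/
theorem statement7 (ω : ℝ → ℝ) (hmod : IsModulus ω) (hreg : IsRegularModulus ω)
    (Mt : ℝ) (hMt : 1 ≤ Mt) :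
    ∃ C : ℝ, 0 < C ∧ ∀ (Ω : Set ℂ) (τ : ℂ → ℂ),
      IsBoundedDomain Ω →
      Function.Bijective τ →
      (∀ z w : ℂ, Mt⁻¹ * ‖z - w‖ ≤ ‖τ z - τ w‖ ∧
        ‖τ z - τ w‖ ≤ Mt * ‖z - w‖) →
      τ '' Metric.ball 0 1 = Ω →
      τ '' Metric.sphere 0 1 = frontier Ω →
      ∀ (f : ℂ → ℂ) (M Msup : ℝ),
        AEStronglyMeasurable f (volume.restrict Ω) →
        (∀ᵐ z ∂volume.restrict Ω, ‖f z‖ ≤ Msup) →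
        BMOBoundOn ω Ω f M →
        (∃ B : ℝ, ∀ᵐ z : ℂ, ‖(fun z => if z ∈ Ω then f z
              else f (τ ((starRingEnd ℂ) (Function.invFun τ z))⁻¹)) z‖ ≤ B) ∧
        BMOBound ω
          (fun z => if z ∈ Ω then f z
            else f (τ ((starRingEnd ℂ) (Function.invFun τ z))⁻¹))
          (C * (M + Msup)) := by
  obtain ⟨C₁, hC₁, hscale⟩ := omega_scale hmod hreg
  obtain ⟨hcont, hmono, hω0, hωpos⟩ := hmod
  have hω1 : 0 < ω 1 := hωpos 1 one_pos
  have hMt0 : 0 < Mt := lt_of_lt_of_le one_pos hMt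
  have hC₁0 : 0 < C₁ := lt_of_lt_of_le one_pos hC₁
  set cA : ℝ := 1 / ω 1 with hcA
  set cC : ℝ := 32 * C₁ * Mt^10 * (1+2*Mt)^4 with hcC
  set cD : ℝ := (1 + 4*Mt^4*(1+2*Mt)^4) * C₁ * (2+8*Mt^2)^3 with hcD
  have h2Mt : (0:ℝ) < 1 + 2*Mt := by linarith
  have hcA0 : 0 < cA := by rw [hcA]; exact div_pos one_pos hω1
  have hcC0 : 0 < cC := by
    rw [hcC]
    exact mul_pos (mul_pos (mul_pos (by norm_num) hC₁0) (pow_pos hMt0 10)) (pow_pos h2Mt 4)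
  have hcD0 : 0 < cD := by
    rw [hcD]
    have h1 : (0:ℝ) < Mt^4 := pow_pos hMt0 4
    have h2 : (0:ℝ) < (1+2*Mt)^4 := pow_pos h2Mt 4
    have h3 : (0:ℝ) < 2 + 8*Mt^2 := by nlinarith
    exact mul_pos (mul_pos (by nlinarith) hC₁0) (pow_pos h3 3)
  refine ⟨2*(cA + 1 + cC + cD), by linarith, ?_⟩
  intro Ω τ hΩ hbij hlip hball hsphere f M Msup hmeas hbound hBMO
  obtain ⟨hΩopen, hΩconn, hΩbdd⟩ := hΩ
  have hΩmeas : MeasurableSet Ω := hΩopen.measurableSet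
  set σ : ℂ → ℂ := Function.invFun τ with hσdef
  have hτσ : ∀ z, τ (σ z) = z := fun z => Function.rightInverse_invFun hbij.2 z
  have hστ : ∀ z, σ (τ z) = z := fun z => Function.leftInverse_invFun hbij.1 z
  have hτlip : ∀ z w, ‖τ z - τ w‖ ≤ Mt * ‖z - w‖ :=
    fun z w => (hlip z w).2
  have hσlip : ∀ a b, ‖σ a - σ b‖ ≤ Mt * ‖a - b‖ := by
    intro a b
    have h := (hlip (σ a) (σ b)).1
    rw [hτσ, hτσ] at h
    calc ‖σ a - σ b‖ = Mt * (Mt⁻¹ * ‖σ a - σ b‖) := by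
          field_simp
      _ ≤ Mt * ‖a - b‖ := mul_le_mul_of_nonneg_left h hMt0.le
  set Λ : ℂ → ℂ := fun z => τ ((starRingEnd ℂ (σ z))⁻¹) with hΛdef
  have hσnorm : ∀ z, z ∉ Ω → 1 ≤ ‖σ z‖ := by
    intro z hz
    by_contra h
    push_neg at h
    have h1 : σ z ∈ Metric.ball (0:ℂ) 1 := by
      simpa [Metric.mem_ball, Complex.dist_eq] using h
    have h2 : τ (σ z) ∈ Ω := by rw [← hball]; exact ⟨σ z, h1, rfl⟩
    rw [hτσ] at h2
    exact hz h2
  have hclΩ : closure Ω = τ '' Metric.closedBall 0 1 := by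
    rw [← Metric.ball_union_sphere, image_union, hball, hsphere,
      closure_eq_interior_union_frontier, hΩopen.interior_eq]
  have hext_norm : ∀ z, z ∉ closure Ω → 1 < ‖σ z‖ := by
    intro z hz
    rcases lt_or_ge 1 (‖σ z‖) with h | h
    · exact h
    · exfalso
      apply hz
      rw [hclΩ]
      refine ⟨σ z, ?_, hτσ z⟩
      simpa [Metric.mem_closedBall, Complex.dist_eq] using h
  have hσ0 : ∀ z, z ∉ Ω → σ z ≠ 0 := by
    intro z hz h0
    have h1 := hσnorm z hz
    rw [h0] at h1
    norm_num at h1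
  have hΛmem : ∀ z, z ∉ closure Ω → Λ z ∈ Ω := by
    intro z hz
    have h1 := hext_norm z hz
    rw [← hball]
    refine ⟨(starRingEnd ℂ (σ z))⁻¹, ?_, rfl⟩
    simp only [Metric.mem_ball, Complex.dist_eq, sub_zero]
    rw [norm_inv, Complex.norm_conj]
    rw [inv_lt_one_iff₀]
    right; exact h1
  have hσΛ : ∀ z, σ (Λ z) = (starRingEnd ℂ (σ z))⁻¹ := fun z => hστ _
  have hΛdiff : ∀ z z', σ z ≠ 0 → σ z' ≠ 0 → ‖Λ z - Λ z'‖ ≤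
      (Mt^2 * ‖z - z'‖) * ((‖σ z‖)⁻¹ * (‖σ z'‖)⁻¹) := by
    intro z z' h0 h0'
    have hc0 : starRingEnd ℂ (σ z) ≠ 0 := by simpa using h0
    have hc0' : starRingEnd ℂ (σ z') ≠ 0 := by simpa using h0'
    have key : (starRingEnd ℂ (σ z))⁻¹ - (starRingEnd ℂ (σ z'))⁻¹
        = (starRingEnd ℂ (σ z' - σ z)) * ((starRingEnd ℂ (σ z))⁻¹ * (starRingEnd ℂ (σ z'))⁻¹) := by
      rw [map_sub]
      field_simp
    have h2 : ‖Λ z - Λ z'‖ ≤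
        Mt * ‖(starRingEnd ℂ (σ z))⁻¹ - (starRingEnd ℂ (σ z'))⁻¹‖ :=
      hτlip _ _
    rw [key, norm_mul, norm_mul, norm_inv, norm_inv, Complex.norm_conj, Complex.norm_conj,
      Complex.norm_conj] at h2
    have h3 : ‖σ z' - σ z‖ ≤ Mt * ‖z - z'‖ := by
      rw [norm_sub_rev]
      exact (hσlip z z').trans (by rw [norm_sub_rev])
    have hinv1 : (0:ℝ) ≤ (‖σ z‖)⁻¹ := by positivity
    have hinv2 : (0:ℝ) ≤ (‖σ z'‖)⁻¹ := by positivity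
    calc ‖Λ z - Λ z'‖ ≤
        Mt * (‖σ z' - σ z‖ * ((‖σ z‖)⁻¹ * (‖σ z'‖)⁻¹)) := h2
      _ ≤ Mt * ((Mt * ‖z - z'‖) * ((‖σ z‖)⁻¹ * (‖σ z'‖)⁻¹)) := by
          apply mul_le_mul_of_nonneg_left _ hMt0.le
          apply mul_le_mul_of_nonneg_right h3 (by positivity)
      _ = (Mt^2 * ‖z - z'‖) * ((‖σ z‖)⁻¹ * (‖σ z'‖)⁻¹) := by
          ring
  have hΛnear : ∀ z, z ∉ Ω → ‖Λ z - z‖ ≤ 2 * Mt * (‖σ z‖ - 1) := by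
    intro z hz
    have h1 := hσnorm z hz
    have h0 := hσ0 z hz
    have hc0 : starRingEnd ℂ (σ z) ≠ 0 := by simpa using h0
    have hd0 : (0:ℝ) < ‖σ z‖ := by linarith
    have key : (starRingEnd ℂ (σ z))⁻¹ - σ z
        = (1 - σ z * starRingEnd ℂ (σ z)) * (starRingEnd ℂ (σ z))⁻¹ := by
      field_simp
    have habs1 : ‖(starRingEnd ℂ (σ z))⁻¹ - σ z‖
        = ((‖σ z‖)^2 - 1) * (‖σ z‖)⁻¹ := by
      rw [key, norm_mul, norm_inv, Complex.norm_conj]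
      congr 1
      have hmc : σ z * starRingEnd ℂ (σ z) = ((‖σ z‖)^2 : ℝ) := by
        rw [Complex.mul_conj]
        norm_cast
        exact (Complex.sq_norm (σ z)).symm
      rw [hmc, show (1 : ℂ) - ((‖σ z‖)^2 : ℝ) = ((1 - (‖σ z‖)^2 : ℝ) : ℂ)
        by push_cast; ring]
      rw [Complex.norm_real, Real.norm_eq_abs, abs_of_nonpos (by nlinarith)]
      ring
    have h2 : ‖Λ z - z‖ ≤ Mt * (((‖σ z‖)^2 - 1) * (‖σ z‖)⁻¹) := by
      have h3 := hτlip ((starRingEnd ℂ (σ z))⁻¹) (σ z)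
      rw [hτσ z] at h3
      rw [← habs1]
      exact h3
    refine h2.trans ?_
    have h4 : ((‖σ z‖) + 1) * (‖σ z‖)⁻¹ ≤ 2 := by
      rw [mul_inv_le_iff₀ hd0]
      linarith
    have h5 : ((‖σ z‖)^2 - 1) * (‖σ z‖)⁻¹
        = (‖σ z‖ - 1) * (((‖σ z‖) + 1) * (‖σ z‖)⁻¹) := by
      ring
    rw [h5]
    have h6 : (‖σ z‖ - 1) * (((‖σ z‖) + 1) * (‖σ z‖)⁻¹)
        ≤ (‖σ z‖ - 1) * 2 := by
      apply mul_le_mul_of_nonneg_left h4 (by linarith)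
    nlinarith [h6, hMt0]
  have hζbound : ∀ z, z ∉ Ω → ∀ ζ, ζ ∈ frontier Ω →
      ‖σ z‖ - 1 ≤ Mt * ‖z - ζ‖ := by
    intro z hz ζ hζ
    rw [← hsphere] at hζ
    obtain ⟨s, hs, rfl⟩ := hζ
    have hs1 : ‖s‖ = 1 := by
      simpa [Complex.dist_eq] using hs
    have h2 := hσlip z (τ s)
    rw [hστ] at h2
    have h3 : ‖σ z‖ - ‖s‖ ≤ ‖σ z - s‖ := by
      have := norm_sub_norm_le (σ z) s
      simpa using this
    rw [hs1] at h3
    linarith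
  have hΛΛ : ∀ z, σ z ≠ 0 → Λ (Λ z) = z := by
    intro z h0
    show τ ((starRingEnd ℂ (σ (Λ z)))⁻¹) = z
    rw [hσΛ, map_inv₀, Complex.conj_conj, inv_inv]
    exact hτσ z
  have himg : ∀ (E A : Set ℂ), E ⊆ Ωᶜ → E ∩ Λ ⁻¹' A = Λ '' (A ∩ Λ '' E) := by
    intro E A hE
    ext z
    constructor
    · rintro ⟨hzE, hzA⟩
      exact ⟨Λ z, ⟨hzA, z, hzE, rfl⟩, hΛΛ z (hσ0 z (hE hzE))⟩
    · rintro ⟨u, ⟨huA, z', hz'E, rfl⟩, rfl⟩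
      rw [hΛΛ z' (hσ0 z' (hE hz'E))]
      refine ⟨hz'E, ?_⟩
      show Λ z' ∈ A
      exact huA
  have hfrontier_null : volume (frontier Ω) = 0 := by
    rw [← hsphere]
    have h := lip_vol_image (c := Mt) hMt0.le (h := τ) (s := Metric.sphere 0 1)
      (fun x _ y _ => by simpa [Complex.dist_eq] using hτlip x y)
    apply le_antisymm _ zero_le
    calc volume (τ '' Metric.sphere 0 1)
        ≤ ENNReal.ofReal (4 * Mt^2) * volume (Metric.sphere (0:ℂ) 1) := h
      _ = 0 := by rw [Measure.addHaar_sphere volume, mul_zero]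
  have hσcont : Continuous σ := by
    have h : LipschitzWith Mt.toNNReal σ := LipschitzWith.of_dist_le_mul (fun a b => by
      simpa [Complex.dist_eq, Real.coe_toNNReal _ hMt0.le] using hσlip a b)
    exact h.continuous
  have hτcont : Continuous τ := by
    have h : LipschitzWith Mt.toNNReal τ := LipschitzWith.of_dist_le_mul (fun a b => by
      simpa [Complex.dist_eq, Real.coe_toNNReal _ hMt0.le] using hτlip a b)
    exact h.continuous
  have hΛcont : ContinuousOn Λ Ωᶜ := by
    apply hτcont.comp_continuousOn
    apply ContinuousOn.inv₀
    · exact (Complex.continuous_conj.comp hσcont).continuousOn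
    · intro z hz
      simpa using hσ0 z hz
  -- lower bounds for σ on reflected sets
  have hinvIm : ∀ (E : Set ℂ) (R : ℝ), E ⊆ Ωᶜ → (∀ z ∈ E, ‖σ z‖ ≤ R) →
      ∀ u ∈ Λ '' E, σ u ≠ 0 ∧ (‖σ u‖)⁻¹ ≤ R := by
    rintro E R hE hRb u ⟨z, hzE, rfl⟩
    have hz0 : σ z ≠ 0 := hσ0 z (hE hzE)
    have hc0 : starRingEnd ℂ (σ z) ≠ 0 := by simpa using hz0
    constructor
    · rw [hσΛ]
      exact inv_ne_zero hc0
    · rw [hσΛ, norm_inv, Complex.norm_conj, inv_inv]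
      exact hRb z hzE
  have hΛlipIm : ∀ (E : Set ℂ) (R : ℝ), E ⊆ Ωᶜ → (∀ z ∈ E, ‖σ z‖ ≤ R) →
      ∀ x ∈ Λ '' E, ∀ y ∈ Λ '' E, dist (Λ x) (Λ y) ≤ (Mt^2*R^2) * dist x y := by
    intro E R hE hRb x hx y hy
    obtain ⟨hx0, hxR⟩ := hinvIm E R hE hRb x hx
    obtain ⟨hy0, hyR⟩ := hinvIm E R hE hRb y hy
    have h := hΛdiff x y hx0 hy0
    rw [Complex.dist_eq, Complex.dist_eq]
    refine h.trans ?_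
    have h1 : (0:ℝ) ≤ (‖σ x‖)⁻¹ := by positivity
    have h2 : (0:ℝ) ≤ (‖σ y‖)⁻¹ := by positivity
    have h3 : (0:ℝ) ≤ Mt^2 * ‖x - y‖ := by positivity
    have h4 : (‖σ x‖)⁻¹ * (‖σ y‖)⁻¹ ≤ R^2 := by nlinarith
    calc Mt ^ 2 * ‖x - y‖ * ((‖σ x‖)⁻¹ * (‖σ y‖)⁻¹)
        ≤ Mt ^ 2 * ‖x - y‖ * R^2 := mul_le_mul_of_nonneg_left h4 h3
      _ = Mt^2*R^2 * ‖x - y‖ := by ring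
  have htransfer : ∀ (E : Set ℂ), MeasurableSet E → E ⊆ Ωᶜ → ∀ R : ℝ, 0 < R →
      (∀ z ∈ E, ‖σ z‖ ≤ R) → ∀ (S' : Set ℂ), MeasurableSet S' → Λ '' E ⊆ S' →
      ∀ (h : ℂ → ℝ≥0∞), Measurable h →
      ∫⁻ z in E, h (Λ z) ≤ ENNReal.ofReal (4 * (Mt^2*R^2)^2) * ∫⁻ u in S', h u := by
    intro E hEmeas hEc R hR hRb S' hS'meas hsub h hh
    have hΛae : AEMeasurable Λ (volume.restrict E) :=
      (hΛcont.mono hEc).aemeasurable hEmeas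
    have hmap : ∫⁻ z in E, h (Λ z) = ∫⁻ u, h u ∂(Measure.map Λ (volume.restrict E)) :=
      (lintegral_map' hh.aemeasurable hΛae).symm
    rw [hmap]
    have hle : Measure.map Λ (volume.restrict E) ≤
        (ENNReal.ofReal (4 * (Mt^2*R^2)^2)) • volume.restrict S' := by
      rw [Measure.le_iff]
      intro A hA
      rw [Measure.map_apply_of_aemeasurable hΛae hA, Measure.restrict_apply' hEmeas]
      have hid : Λ ⁻¹' A ∩ E = Λ '' (A ∩ Λ '' E) := by
        rw [inter_comm]; exact himg E A hEc
      rw [hid]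
      calc volume (Λ '' (A ∩ Λ '' E)) ≤
          ENNReal.ofReal (4 * (Mt^2*R^2)^2) * volume (A ∩ Λ '' E) :=
            lip_vol_image (by positivity) (fun x hx y hy =>
              hΛlipIm E R hEc hRb x hx.2 y hy.2)
        _ ≤ ENNReal.ofReal (4 * (Mt^2*R^2)^2) * (volume.restrict S') A := by
            apply mul_le_mul_right
            rw [Measure.restrict_apply hA]
            exact measure_mono (inter_subset_inter_right _ hsub)
        _ = ((ENNReal.ofReal (4 * (Mt^2*R^2)^2)) • volume.restrict S') A := by
            rw [Measure.smul_apply, smul_eq_mul]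
    calc ∫⁻ u, h u ∂(Measure.map Λ (volume.restrict E))
        ≤ ∫⁻ u, h u ∂((ENNReal.ofReal (4 * (Mt^2*R^2)^2)) • volume.restrict S') :=
          lintegral_mono' hle le_rfl
      _ = ENNReal.ofReal (4 * (Mt^2*R^2)^2) * ∫⁻ u in S', h u := lintegral_smul_measure _ _
  -- nonnegativity of M and Msup
  have hΩne : Ω.Nonempty := hΩconn.nonempty
  have hΩpos : 0 < volume Ω := hΩopen.measure_pos volume hΩne
  have hMsup0 : 0 ≤ Msup := by
    by_contra hcon
    push_neg at hcon
    have h2 : ∀ᵐ z ∂volume.restrict Ω, False := by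
      filter_upwards [hbound] with z hz
      have : (0:ℝ) ≤ ‖f z‖ := norm_nonneg _
      linarith
    rw [ae_iff] at h2
    simp only [not_false_eq_true, setOf_true] at h2
    rw [Measure.restrict_apply_univ] at h2
    exact absurd h2 hΩpos.ne'
  have hM0 : 0 ≤ M := by
    obtain ⟨z₀, hz₀⟩ := hΩne
    have h := hBMO z₀ 1 one_pos ⟨z₀, self_mem_sq one_pos.le, hz₀⟩
    have h2 : (0:ℝ) ≤ ∫ z in Sq z₀ 1 ∩ Ω, ‖f z - avgOn f (Sq z₀ 1 ∩ Ω)‖ :=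
      integral_nonneg fun z => norm_nonneg _
    nlinarith [hω1]
  -- measurable bounded representative of f
  obtain ⟨f₀, hf₀meas, hff₀⟩ := hmeas
  set f₁ : ℂ → ℂ := fun z => if ‖f₀ z‖ ≤ Msup then f₀ z else 0 with hf₁def
  have hf₁meas : Measurable f₁ := by
    apply Measurable.ite _ hf₀meas.measurable measurable_const
    exact measurableSet_le (continuous_norm.measurable.comp hf₀meas.measurable)
      measurable_const
  have hf₁bdd : ∀ z, ‖f₁ z‖ ≤ Msup := by
    intro z
    show ‖if ‖f₀ z‖ ≤ Msup then f₀ z else 0‖ ≤ Msup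
    by_cases h : ‖f₀ z‖ ≤ Msup
    · rwa [if_pos h]
    · rw [if_neg h]
      simpa using hMsup0
  have hff₁ : f =ᵐ[volume.restrict Ω] f₁ := by
    filter_upwards [hff₀, hbound] with z h1 h2
    show f z = if ‖f₀ z‖ ≤ Msup then f₀ z else 0
    rw [← h1, if_pos h2, h1]
  set N : Set ℂ := {z | z ∈ Ω ∧ f z ≠ f₁ z} with hNdef
  have hNnull : volume N = 0 := by
    have h := hff₁
    rw [EventuallyEq, ae_restrict_iff' hΩmeas, ae_iff] at h
    apply measure_mono_null _ h
    intro z hz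
    simp only [hNdef, mem_setOf_eq] at hz ⊢
    tauto
  have hEnull : volume {z | z ∉ closure Ω ∧ Λ z ∈ N} = 0 := by
    have hcover : {z | z ∉ closure Ω ∧ Λ z ∈ N} ⊆
        ⋃ n : ℕ, ({z | z ∉ closure Ω ∧ ‖σ z‖ ≤ n+1} ∩ Λ ⁻¹' N) := by
      intro z hz
      obtain ⟨n, hn⟩ := exists_nat_ge (‖σ z‖)
      exact mem_iUnion.2 ⟨n, ⟨⟨hz.1, hn.trans (by linarith)⟩, hz.2⟩⟩
    apply measure_mono_null hcover
    apply measure_iUnion_null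
    intro n
    set E := {z | z ∉ closure Ω ∧ ‖σ z‖ ≤ n+1} with hEdef
    have hEc : E ⊆ Ωᶜ := fun z hz => fun hzΩ => hz.1 (subset_closure hzΩ)
    have hid : E ∩ Λ ⁻¹' N = Λ '' (N ∩ Λ '' E) := himg E N hEc
    rw [hid]
    apply le_antisymm _ zero_le
    have hRb : ∀ z ∈ E, ‖σ z‖ ≤ (n:ℝ)+1 := fun z hz => hz.2
    calc volume (Λ '' (N ∩ Λ '' E))
        ≤ ENNReal.ofReal (4 * (Mt^2*((n:ℝ)+1)^2)^2) * volume (N ∩ Λ '' E) :=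
          lip_vol_image (by positivity) (fun x hx y hy =>
            hΛlipIm E ((n:ℝ)+1) hEc hRb x hx.2 y hy.2)
      _ ≤ ENNReal.ofReal (4 * (Mt^2*((n:ℝ)+1)^2)^2) * volume N :=
          mul_le_mul_right (measure_mono inter_subset_left) _
      _ = 0 := by rw [hNnull, mul_zero]
  -- the extension and its measurable representative
  set g : ℂ → ℂ := fun z => if z ∈ Ω then f z else f (Λ z) with hgdef
  set g₀ : ℂ → ℂ := fun z => if z ∈ Ω then f₁ z else f₁ (Λ z) with hg₀def
  have hg₀bdd : ∀ z, ‖g₀ z‖ ≤ Msup := by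
    intro z
    show ‖if z ∈ Ω then f₁ z else f₁ (Λ z)‖ ≤ Msup
    by_cases h : z ∈ Ω
    · rw [if_pos h]; exact hf₁bdd _
    · rw [if_neg h]; exact hf₁bdd _
  have hgg₀ : g =ᵐ[volume] g₀ := by
    have hsub : {z | g z ≠ g₀ z} ⊆ (N ∪ frontier Ω) ∪ {z | z ∉ closure Ω ∧ Λ z ∈ N} := by
      intro z hz
      simp only [mem_setOf_eq] at hz
      by_cases h1 : z ∈ Ω
      · left; left
        refine ⟨h1, ?_⟩
        intro hfz
        apply hz
        show (if z ∈ Ω then f z else f (Λ z)) = (if z ∈ Ω then f₁ z else f₁ (Λ z))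
        rw [if_pos h1, if_pos h1, hfz]
      · by_cases h2 : z ∈ closure Ω
        · left; right
          rw [frontier, hΩopen.interior_eq]
          exact ⟨h2, h1⟩
        · right
          refine ⟨h2, hΛmem z h2, ?_⟩
          intro hfz
          apply hz
          show (if z ∈ Ω then f z else f (Λ z)) = (if z ∈ Ω then f₁ z else f₁ (Λ z))
          rw [if_neg h1, if_neg h1, hfz]
    have hnull : volume ((N ∪ frontier Ω) ∪ {z | z ∉ closure Ω ∧ Λ z ∈ N}) = 0 :=
      measure_union_null (measure_union_null hNnull hfrontier_null) hEnull
    rw [EventuallyEq, ae_iff]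
    exact measure_mono_null hsub hnull
  have hg₀meas : AEMeasurable g₀ volume := by
    have h1 : AEMeasurable g₀ (volume.restrict Ω) := by
      apply (hf₁meas.aemeasurable.mono_measure Measure.restrict_le_self).congr
      rw [EventuallyEq, ae_restrict_iff' hΩmeas]
      apply ae_of_all
      intro z hzΩ
      show f₁ z = (if z ∈ Ω then f₁ z else f₁ (Λ z))
      rw [if_pos hzΩ]
    have h2 : AEMeasurable g₀ (volume.restrict Ωᶜ) := by
      have hΛae : AEMeasurable Λ (volume.restrict Ωᶜ) :=
        hΛcont.aemeasurable hΩmeas.compl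
      apply (hf₁meas.comp_aemeasurable hΛae).congr
      rw [EventuallyEq, ae_restrict_iff' hΩmeas.compl]
      apply ae_of_all
      intro z hzΩ
      show f₁ (Λ z) = (if z ∈ Ω then f₁ z else f₁ (Λ z))
      rw [if_neg hzΩ]
    have h3 : AEMeasurable g₀ (volume.restrict Ω + volume.restrict Ωᶜ) :=
      aemeasurable_add_measure_iff.2 ⟨h1, h2⟩
    rwa [Measure.restrict_add_restrict_compl hΩmeas] at h3
  -- lintegral form of the BMO hypothesis
  have hBMO' : ∀ (c' : ℂ) (l' : ℝ), 0 < l' → (Sq c' l' ∩ Ω).Nonempty →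
      ∫⁻ u in Sq c' l' ∩ Ω,
        ENNReal.ofReal (‖f₁ u - avgOn f (Sq c' l' ∩ Ω)‖)
        ≤ ENNReal.ofReal (M * (ω l' * l' ^ 2)) := by
    intro c' l' hl' hne
    have hres : volume.restrict (Sq c' l' ∩ Ω) = (volume.restrict Ω).restrict (Sq c' l') := by
      rw [Measure.restrict_restrict (sq_measurable c' l')]
    have hres_le : volume.restrict (Sq c' l' ∩ Ω) ≤ volume.restrict Ω := by
      rw [hres]; exact Measure.restrict_le_self
    have hfS : AEStronglyMeasurable f (volume.restrict (Sq c' l' ∩ Ω)) :=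
      ⟨f₀, hf₀meas, ae_mono hres_le hff₀⟩
    have hbS : ∀ᵐ z ∂volume.restrict (Sq c' l' ∩ Ω), ‖f z‖ ≤ Msup :=
      ae_mono hres_le hbound
    have hffS : f =ᵐ[volume.restrict (Sq c' l' ∩ Ω)] f₁ := ae_mono hres_le hff₁
    set a := avgOn f (Sq c' l' ∩ Ω) with hadef
    have hcongr : ∫⁻ u in Sq c' l' ∩ Ω, ENNReal.ofReal (‖f₁ u - a‖) =
        ∫⁻ u in Sq c' l' ∩ Ω, ENNReal.ofReal (‖f u - a‖) := by
      apply lintegral_congr_ae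
      filter_upwards [hffS] with z hz
      rw [hz]
    rw [hcongr]
    have hfin : volume (Sq c' l' ∩ Ω) < ⊤ := by
      apply lt_of_le_of_lt (measure_mono inter_subset_left)
      rw [sq_volume]
      exact ENNReal.mul_lt_top ENNReal.ofReal_lt_top ENNReal.ofReal_lt_top
    have habsm : AEStronglyMeasurable (fun u => ‖f u - a‖)
        (volume.restrict (Sq c' l' ∩ Ω)) := by
      have h := (hfS.sub (aestronglyMeasurable_const (b := a))).norm
      have heqfun : (fun u => ‖f u - a‖) = fun u => ‖f u - a‖ := by
        funext u; rfl
      rw [heqfun]; exact h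
    have hint : Integrable (fun u => ‖f u - a‖)
        (volume.restrict (Sq c' l' ∩ Ω)) := by
      apply Integrable.mono' (g := fun _ => Msup + ‖a‖)
        (integrableOn_const hfin.ne) habsm
      filter_upwards [hbS] with z hz
      rw [Real.norm_eq_abs, abs_of_nonneg (norm_nonneg _)]
      calc ‖f z - a‖ ≤ ‖f z‖ + ‖a‖ := by
            exact norm_sub_le (f z) a
        _ ≤ Msup + ‖a‖ := by linarith
    have heq : ∫⁻ u in Sq c' l' ∩ Ω, ENNReal.ofReal (‖f u - a‖) =
        ENNReal.ofReal (∫ u in Sq c' l' ∩ Ω, ‖f u - a‖) :=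
      (MeasureTheory.ofReal_integral_eq_lintegral_ofReal hint
        (ae_of_all _ fun u => norm_nonneg _)).symm
    rw [heq]
    exact ENNReal.ofReal_le_ofReal (hBMO c' l' hl' hne)
  have hS0 : (0:ℝ) < cA + 1 + cC + cD := by linarith
  have hmain : ∀ (c : ℂ) (l : ℝ), 0 < l → ∃ a : ℂ,
      ∫⁻ z in Sq c l, ENNReal.ofReal (‖g₀ z - a‖) ≤
        ENNReal.ofReal ((cA + 1 + cC + cD) * (M + Msup) * (ω l * l ^ 2)) := by
    intro c l hl
    have hωl : 0 < ω l := hωpos l hl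
    have hMM : 0 ≤ M + Msup := by linarith
    have hQmeas := sq_measurable c l
    rcases le_or_gt 1 l with hl1 | hl1
    -- Case A : large squares
    · refine ⟨0, ?_⟩
      have hωll : ω 1 ≤ ω l := hmono (mem_Ici.2 (by norm_num)) (mem_Ici.2 hl.le) hl1
      calc ∫⁻ z in Sq c l, ENNReal.ofReal (‖g₀ z - 0‖)
          ≤ ∫⁻ _ in Sq c l, ENNReal.ofReal Msup := by
            apply lintegral_mono
            intro z
            apply ENNReal.ofReal_le_ofReal
            rw [sub_zero]
            exact hg₀bdd z
        _ = ENNReal.ofReal Msup * volume (Sq c l) := by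
            rw [lintegral_const, Measure.restrict_apply MeasurableSet.univ, univ_inter]
        _ = ENNReal.ofReal (Msup * (l * l)) := by
            rw [sq_volume, ← ENNReal.ofReal_mul hl.le, ← ENNReal.ofReal_mul hMsup0]
        _ ≤ ENNReal.ofReal ((cA + 1 + cC + cD) * (M + Msup) * (ω l * l ^ 2)) := by
            apply ENNReal.ofReal_le_ofReal
            have h1 : 1 ≤ cA * ω l := by
              rw [hcA, div_mul_eq_mul_div, le_div_iff₀ hω1]
              linarith
            have h2 : Msup * (l * l) = Msup * l^2 * 1 := by ring
            rw [h2]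
            calc Msup * l^2 * 1 ≤ Msup * l^2 * (cA * ω l) :=
                  mul_le_mul_of_nonneg_left h1 (by positivity)
              _ = cA * Msup * (ω l * l^2) := by ring
              _ ≤ (cA + 1 + cC + cD) * (M + Msup) * (ω l * l ^ 2) := by
                  apply mul_le_mul_of_nonneg_right _ (by positivity)
                  apply mul_le_mul (by linarith) (by linarith) hMsup0 hS0.le
    · by_cases hfr : (Sq c l ∩ frontier Ω).Nonempty
      -- Case D : the square meets the boundary
      · obtain ⟨ζ, hζQ, hζfr⟩ := hfr
        set s' : ℝ := (2+8*Mt^2) * l with hs'def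
        have hMtsq : (0:ℝ) < Mt^2 := pow_pos hMt0 2
        have hk : (1:ℝ) ≤ 2+8*Mt^2 := by nlinarith
        have hs'0 : 0 < s' := by rw [hs'def]; nlinarith
        have hQsubs' : Sq c l ⊆ Sq c s' := sq_subset_sq (by rw [hs'def]; nlinarith)
        have hσQ : ∀ z ∈ Sq c l, z ∉ Ω → ‖σ z‖ ≤ 1 + 2*Mt*l := by
          intro z hz hzΩ
          have h1 := hζbound z hzΩ ζ hζfr
          have h2 : ‖z - ζ‖ ≤ 2 * l := by
            calc ‖z - ζ‖ ≤ ‖z - c‖ + ‖c - ζ‖ := by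
                  simpa using norm_sub_le_norm_sub_add_norm_sub z c ζ
              _ ≤ l + l := add_le_add (mem_sq_dist hz)
                  (by rw [norm_sub_rev]; exact mem_sq_dist hζQ)
              _ = 2 * l := by ring
          nlinarith
        have hΛQ : ∀ z ∈ Sq c l, z ∉ Ω → Λ z ∈ Sq c s' := by
          intro z hz hzΩ
          have h1 := hΛnear z hzΩ
          have h2 := hσQ z hz hzΩ
          have h4 : ‖Λ z - c‖ ≤ ‖Λ z - z‖ + ‖z - c‖ := by
            simpa using norm_sub_le_norm_sub_add_norm_sub (Λ z) z c
          have h5 : ‖Λ z - c‖ ≤ (1 + 4*Mt^2) * l := by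
            have h6 := mem_sq_dist hz
            nlinarith
          have h7 := sq_of_dist h5
          have h8 : 2 * ((1 + 4*Mt^2) * l) = s' := by rw [hs'def]; ring
          rwa [h8] at h7
        have hne' : (Sq c s' ∩ Ω).Nonempty := by
          have hζcl : ζ ∈ closure Ω := frontier_subset_closure hζfr
          obtain ⟨y, hyΩ, hyd⟩ := Metric.mem_closure_iff.1 hζcl (l/2) (by linarith)
          refine ⟨y, ?_, hyΩ⟩
          have h6 : ‖y - c‖ ≤ 3*l/2 := by
            have h7 : ‖y - ζ‖ ≤ l/2 := by
              rw [norm_sub_rev]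
              rw [Complex.dist_eq] at hyd
              exact hyd.le
            calc ‖y - c‖ ≤ ‖y - ζ‖ + ‖ζ - c‖ := by
                  simpa using norm_sub_le_norm_sub_add_norm_sub y ζ c
              _ ≤ l/2 + l := add_le_add h7 (mem_sq_dist hζQ)
              _ = 3*l/2 := by ring
          have h8 := sq_of_dist h6
          apply sq_subset_sq _ h8
          rw [hs'def]; nlinarith [hl, sq_nonneg (Mt - 1), hMt0.le, hMt]
        refine ⟨avgOn f (Sq c s' ∩ Ω), ?_⟩
        set a := avgOn f (Sq c s' ∩ Ω) with hadef2
        have hB := hBMO' c s' hs'0 hne'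
        set E := Sq c l ∩ (closure Ω)ᶜ with hEdef2
        have hEmeas : MeasurableSet E :=
          hQmeas.inter isClosed_closure.measurableSet.compl
        have hEc : E ⊆ Ωᶜ := fun z hz h => hz.2 (subset_closure h)
        have hX0 : (0:ℝ) ≤ M * (ω s' * s' ^ 2) :=
          mul_nonneg hM0 (mul_nonneg (hωpos s' hs'0).le (by positivity))
        -- cover
        have hcover : Sq c l ⊆ (Sq c l ∩ Ω) ∪ (E ∪ frontier Ω) := by
          intro z hz
          by_cases h1 : z ∈ Ω
          · exact Or.inl ⟨hz, h1⟩
          · by_cases h2 : z ∈ closure Ω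
            · right; right
              rw [frontier, hΩopen.interior_eq]
              exact ⟨h2, h1⟩
            · right; left
              exact ⟨hz, h2⟩
        have hterm1 : ∫⁻ z in Sq c l ∩ Ω, ENNReal.ofReal (‖g₀ z - a‖) ≤
            ENNReal.ofReal (M * (ω s' * s' ^ 2)) := by
          have hcg : ∫⁻ z in Sq c l ∩ Ω, ENNReal.ofReal (‖g₀ z - a‖) =
              ∫⁻ z in Sq c l ∩ Ω, ENNReal.ofReal (‖f₁ z - a‖) := by
            apply setLIntegral_congr_fun (hQmeas.inter hΩmeas) ?_
            intro z hz
            have h1 : g₀ z = f₁ z := if_pos hz.2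
            simp only [h1]
          rw [hcg]
          refine le_trans (lintegral_mono_set ?_) hB
          exact inter_subset_inter_left _ hQsubs'
        have hterm2 : ∫⁻ z in E, ENNReal.ofReal (‖g₀ z - a‖) ≤
            ENNReal.ofReal (4 * (Mt^2*(1+2*Mt)^2)^2) * ENNReal.ofReal (M * (ω s' * s' ^ 2)) := by
          have hcg : ∫⁻ z in E, ENNReal.ofReal (‖g₀ z - a‖) =
              ∫⁻ z in E, ENNReal.ofReal (‖f₁ (Λ z) - a‖) := by
            apply setLIntegral_congr_fun hEmeas ?_
            intro z hz
            have h1 : g₀ z = f₁ (Λ z) := if_neg (hEc hz)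
            simp only [h1]
          rw [hcg]
          have hRb : ∀ z ∈ E, ‖σ z‖ ≤ 1 + 2*Mt := by
            intro z hz
            have := hσQ z hz.1 (hEc hz)
            nlinarith
          have hΛsub : Λ '' E ⊆ Sq c s' ∩ Ω := by
            rintro u ⟨z, hz, rfl⟩
            exact ⟨hΛQ z hz.1 (hEc hz), hΛmem z hz.2⟩
          have hh : Measurable (fun u => ENNReal.ofReal (‖f₁ u - a‖)) := by
            apply ENNReal.measurable_ofReal.comp
            exact continuous_norm.measurable.comp (hf₁meas.sub measurable_const)
          have htr := htransfer E hEmeas hEc (1+2*Mt) (by linarith) hRb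
            (Sq c s' ∩ Ω) ((sq_measurable _ _).inter hΩmeas) hΛsub _ hh
          exact htr.trans (mul_le_mul_right hB _)
        calc ∫⁻ z in Sq c l, ENNReal.ofReal (‖g₀ z - a‖)
            ≤ ∫⁻ z in (Sq c l ∩ Ω) ∪ (E ∪ frontier Ω),
                ENNReal.ofReal (‖g₀ z - a‖) := lintegral_mono_set hcover
          _ ≤ (∫⁻ z in Sq c l ∩ Ω, ENNReal.ofReal (‖g₀ z - a‖)) +
              ((∫⁻ z in E, ENNReal.ofReal (‖g₀ z - a‖)) +
               (∫⁻ z in frontier Ω, ENNReal.ofReal (‖g₀ z - a‖))) :=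
              le_trans (lintegral_union_le _ _ _) (by
                exact add_le_add_right (lintegral_union_le _ _ _) _)
          _ = (∫⁻ z in Sq c l ∩ Ω, ENNReal.ofReal (‖g₀ z - a‖)) +
              (∫⁻ z in E, ENNReal.ofReal (‖g₀ z - a‖)) := by
              rw [Measure.restrict_eq_zero.2 hfrontier_null, lintegral_zero_measure, add_zero]
          _ ≤ ENNReal.ofReal (M * (ω s' * s' ^ 2)) +
              ENNReal.ofReal (4 * (Mt^2*(1+2*Mt)^2)^2) * ENNReal.ofReal (M * (ω s' * s' ^ 2)) :=
              add_le_add hterm1 hterm2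
          _ = ENNReal.ofReal ((1 + 4 * (Mt^2*(1+2*Mt)^2)^2) * (M * (ω s' * s' ^ 2))) := by
              rw [← ENNReal.ofReal_mul (by positivity), add_mul, one_mul,
                ENNReal.ofReal_add hX0 (by positivity)]
          _ ≤ ENNReal.ofReal ((cA + 1 + cC + cD) * (M + Msup) * (ω l * l ^ 2)) := by
              apply ENNReal.ofReal_le_ofReal
              have hωs' : ω s' ≤ C₁ * (2+8*Mt^2) * ω l := by
                have := hscale (2+8*Mt^2) l hk hl
                rw [hs'def]
                exact this
              have hc₂0 : (0:ℝ) ≤ 1 + 4 * (Mt^2*(1+2*Mt)^2)^2 := by positivity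
              have hs'sq : s'^2 = (2+8*Mt^2)^2 * l^2 := by rw [hs'def]; ring
              calc (1 + 4 * (Mt^2*(1+2*Mt)^2)^2) * (M * (ω s' * s' ^ 2))
                  ≤ (1 + 4 * (Mt^2*(1+2*Mt)^2)^2) * (M * ((C₁ * (2+8*Mt^2) * ω l) * s' ^ 2)) := by
                    apply mul_le_mul_of_nonneg_left _ hc₂0
                    apply mul_le_mul_of_nonneg_left _ hM0
                    apply mul_le_mul_of_nonneg_right hωs' (by positivity)
                _ = cD * M * (ω l * l ^ 2) := by
                    rw [hs'sq, hcD]; ring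
                _ ≤ (cA + 1 + cC + cD) * (M + Msup) * (ω l * l ^ 2) := by
                    apply mul_le_mul_of_nonneg_right _
                      (mul_nonneg hωl.le (by positivity))
                    apply mul_le_mul (by linarith) (by linarith) hM0 hS0.le
      -- the square misses the boundary
      · have hcover : Sq c l ⊆ Ω ∪ (closure Ω)ᶜ := by
          intro z hz
          by_cases h1 : z ∈ closure Ω
          · left
            have h2 := closure_eq_interior_union_frontier Ω ▸ h1
            rcases h2 with h2 | h2
            · rwa [hΩopen.interior_eq] at h2
            · exact absurd ⟨z, hz, h2⟩ hfr
          · right; exact h1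
        by_cases hin : (Sq c l ∩ Ω).Nonempty
        -- Case B : the square is inside Ω
        · have hQsub : Sq c l ⊆ Ω := by
            apply (sq_convex c l).isPreconnected.subset_left_of_subset_union hΩopen
              isClosed_closure.isOpen_compl ?_ hcover hin
            exact Set.disjoint_left.2 fun z hz hz2 => hz2 (subset_closure hz)
          refine ⟨avgOn f (Sq c l ∩ Ω), ?_⟩
          set a := avgOn f (Sq c l ∩ Ω) with hadef2
          have hQΩ : Sq c l ∩ Ω = Sq c l := inter_eq_left.2 hQsub
          have h := hBMO' c l hl hin
          calc ∫⁻ z in Sq c l, ENNReal.ofReal (‖g₀ z - a‖)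
              = ∫⁻ z in Sq c l, ENNReal.ofReal (‖f₁ z - a‖) := by
                apply setLIntegral_congr_fun hQmeas ?_
                intro z hz
                have h1 : g₀ z = f₁ z := if_pos (hQsub hz)
                simp only [h1]
            _ = ∫⁻ z in Sq c l ∩ Ω, ENNReal.ofReal (‖f₁ z - a‖) := by rw [hQΩ]
            _ ≤ ENNReal.ofReal (M * (ω l * l ^ 2)) := h
            _ ≤ ENNReal.ofReal ((cA + 1 + cC + cD) * (M + Msup) * (ω l * l ^ 2)) := by
                apply ENNReal.ofReal_le_ofReal
                apply mul_le_mul_of_nonneg_right _ (mul_nonneg hωl.le (by positivity))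
                calc M = 1 * M := (one_mul M).symm
                  _ ≤ (cA + 1 + cC + cD) * (M + Msup) :=
                    mul_le_mul (by linarith) (by linarith) hM0 hS0.le
        -- Case C : the square is outside the closure of Ω
        · have hQsub : Sq c l ⊆ (closure Ω)ᶜ := fun z hz =>
            (hcover hz).resolve_left (fun h => hin ⟨z, hz, h⟩)
          have hQout : ∀ z ∈ Sq c l, z ∉ closure Ω := fun z hz => hQsub hz
          have hQoutΩ : ∀ z ∈ Sq c l, z ∉ Ω := fun z hz h => hQout z hz (subset_closure h)
          have hcmem : c ∈ Sq c l := self_mem_sq hl.le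
          have hcout : c ∉ closure Ω := hQout c hcmem
          set d := ‖σ c‖ with hddef
          have hd1 : 1 < d := hext_norm c hcout
          set m : ℝ := max 1 (d - Mt * l) with hmdef
          have hm1 : 1 ≤ m := le_max_left _ _
          have hm0 : 0 < m := lt_of_lt_of_le one_pos hm1
          have hmd : m ≤ d := max_le hd1.le (by nlinarith)
          set R : ℝ := d + Mt * l with hRdef
          have hR0 : 0 < R := by rw [hRdef]; nlinarith
          have hbounds : ∀ z ∈ Sq c l, m ≤ ‖σ z‖ ∧ ‖σ z‖ ≤ R := by
            intro z hz
            have h1 := hσlip z c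
            have h2 : ‖z - c‖ ≤ l := mem_sq_dist hz
            have h3 : |‖σ z‖ - ‖σ c‖| ≤ ‖σ z - σ c‖ := by
              simpa using abs_norm_sub_norm_le (σ z) (σ c)
            have h4 : ‖σ z - σ c‖ ≤ Mt * l :=
              h1.trans (mul_le_mul_of_nonneg_left h2 hMt0.le)
            rw [abs_le] at h3
            rw [← hddef] at h3
            have h5 := hσnorm z (hQoutΩ z hz)
            constructor
            · exact max_le h5 (by linarith [h3.1])
            · rw [hRdef]
              linarith [h3.2]
          have hRm : R ≤ m * (1 + 2*Mt) := by
            have hmr := le_max_right 1 (d - Mt * l)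
            rw [hRdef]
            nlinarith [hl1.le, hMt0.le, hm1]
          set s' : ℝ := 2 * (Mt^2 * l / m^2) with hs'def
          have hs'0 : 0 < s' := by
            rw [hs'def]
            have h1 : (0:ℝ) < Mt^2 * l := mul_pos (pow_pos hMt0 2) hl
            have h2 : (0:ℝ) < m^2 := pow_pos hm0 2
            positivity
          have hΛQ : ∀ z ∈ Sq c l, Λ z ∈ Sq (Λ c) s' := by
            intro z hz
            rw [hs'def]
            apply sq_of_dist
            have h := hΛdiff z c (hσ0 z (hQoutΩ z hz)) (hσ0 c (hQoutΩ c hcmem))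
            refine h.trans ?_
            have hz1 := (hbounds z hz).1
            have hinv1 : (‖σ z‖)⁻¹ ≤ m⁻¹ := inv_le_inv_aux hm0 hz1
            have hinv2 : (‖σ c‖)⁻¹ ≤ m⁻¹ := inv_le_inv_aux hm0 hmd
            have h2 : ‖z - c‖ ≤ l := mem_sq_dist hz
            have hizn : (0:ℝ) ≤ (‖σ z‖)⁻¹ := by positivity
            have hicn : (0:ℝ) ≤ (‖σ c‖)⁻¹ := by positivity
            have himn : (0:ℝ) ≤ m⁻¹ := by positivity
            calc Mt ^ 2 * ‖z - c‖ * ((‖σ z‖)⁻¹ * (‖σ c‖)⁻¹)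
                ≤ (Mt ^ 2 * l) * (m⁻¹ * m⁻¹) := by
                  apply mul_le_mul
                  · exact mul_le_mul_of_nonneg_left h2 (by positivity)
                  · exact mul_le_mul hinv1 hinv2 hicn himn
                  · positivity
                  · positivity
              _ = Mt^2 * l / m^2 := by
                  have hm0' : m ≠ 0 := hm0.ne'
                  field_simp
          have hΛcΩ : Λ c ∈ Ω := hΛmem c hcout
          have hne' : (Sq (Λ c) s' ∩ Ω).Nonempty := ⟨Λ c, self_mem_sq hs'0.le, hΛcΩ⟩
          refine ⟨avgOn f (Sq (Λ c) s' ∩ Ω), ?_⟩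
          set a := avgOn f (Sq (Λ c) s' ∩ Ω) with hadef2
          have hEc : Sq c l ⊆ Ωᶜ := fun z hz => hQoutΩ z hz
          have hΛsub : Λ '' Sq c l ⊆ Sq (Λ c) s' ∩ Ω := by
            rintro u ⟨z, hz, rfl⟩
            exact ⟨hΛQ z hz, hΛmem z (hQout z hz)⟩
          have hgeq : ∫⁻ z in Sq c l, ENNReal.ofReal (‖g₀ z - a‖) =
              ∫⁻ z in Sq c l, ENNReal.ofReal (‖f₁ (Λ z) - a‖) := by
            apply setLIntegral_congr_fun hQmeas ?_
            intro z hz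
            have h1 : g₀ z = f₁ (Λ z) := if_neg (hQoutΩ z hz)
            simp only [h1]
          rw [hgeq]
          have hh : Measurable (fun u => ENNReal.ofReal (‖f₁ u - a‖)) := by
            apply ENNReal.measurable_ofReal.comp
            exact continuous_norm.measurable.comp (hf₁meas.sub measurable_const)
          have htr := htransfer (Sq c l) hQmeas hEc R hR0 (fun z hz => (hbounds z hz).2)
            (Sq (Λ c) s' ∩ Ω) ((sq_measurable _ _).inter hΩmeas) hΛsub _ hh
          refine htr.trans ?_
          have hB := hBMO' (Λ c) s' hs'0 hne'
          calc ENNReal.ofReal (4 * (Mt ^ 2 * R ^ 2) ^ 2) *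
              ∫⁻ u in Sq (Λ c) s' ∩ Ω, ENNReal.ofReal (‖f₁ u - a‖)
              ≤ ENNReal.ofReal (4 * (Mt ^ 2 * R ^ 2) ^ 2) *
                ENNReal.ofReal (M * (ω s' * s' ^ 2)) := mul_le_mul_right hB _
            _ = ENNReal.ofReal ((4 * (Mt ^ 2 * R ^ 2) ^ 2) * (M * (ω s' * s' ^ 2))) := by
                rw [← ENNReal.ofReal_mul (by positivity)]
            _ ≤ ENNReal.ofReal ((cA + 1 + cC + cD) * (M + Msup) * (ω l * l ^ 2)) := by
                apply ENNReal.ofReal_le_ofReal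
                have hs'le : s' ≤ 2*Mt^2*l := by
                  rw [hs'def]
                  have h1 : Mt^2 * l / m^2 ≤ Mt^2 * l / 1 := by
                    apply div_le_div_of_nonneg_left (by positivity) one_pos
                    nlinarith
                  nlinarith [h1]
                have hωs' : ω s' ≤ C₁ * (2*Mt^2) * ω l := by
                  have h1 : ω s' ≤ ω (2*Mt^2 * l) := by
                    apply hmono (mem_Ici.2 hs'0.le) (mem_Ici.2 (by positivity))
                    nlinarith [hs'le]
                  refine h1.trans ?_
                  exact hscale (2*Mt^2) l (by nlinarith) hl
                have hR4 : R^4 ≤ m^4 * (1+2*Mt)^4 := by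
                  calc R^4 ≤ (m * (1+2*Mt))^4 := pow_le_pow_left₀ hR0.le hRm 4
                    _ = m^4 * (1+2*Mt)^4 := mul_pow _ _ _
                have hs'sq : s'^2 = 4 * Mt^4 * l^2 / m^4 := by
                  rw [hs'def]
                  field_simp
                  ring
                have hprod : R^4 * s'^2 ≤ 4 * Mt^4 * l^2 * (1+2*Mt)^4 := by
                  rw [hs'sq]
                  calc R^4 * (4 * Mt^4 * l^2 / m^4)
                      ≤ (m^4 * (1+2*Mt)^4) * (4 * Mt^4 * l^2 / m^4) := by
                        apply mul_le_mul_of_nonneg_right hR4 (by positivity)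
                    _ = 4 * Mt^4 * l^2 * (1+2*Mt)^4 := by
                        field_simp
                have hωs'0 : (0:ℝ) ≤ ω s' := (hωpos s' hs'0).le
                have hstep : ω s' * (R^4 * s'^2) ≤
                    (C₁ * (2*Mt^2) * ω l) * (4 * Mt^4 * l^2 * (1+2*Mt)^4) := by
                  apply mul_le_mul hωs' hprod (by positivity) (by positivity)
                calc (4 * (Mt ^ 2 * R ^ 2) ^ 2) * (M * (ω s' * s' ^ 2))
                    = (4 * Mt^4) * M * (ω s' * (R^4 * s'^2)) := by ring
                  _ ≤ (4 * Mt^4) * M * ((C₁ * (2*Mt^2) * ω l) *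
                      (4 * Mt^4 * l^2 * (1+2*Mt)^4)) := by
                      apply mul_le_mul_of_nonneg_left hstep (by positivity)
                  _ = cC * M * (ω l * l ^ 2) := by rw [hcC]; ring
                  _ ≤ (cA + 1 + cC + cD) * (M + Msup) * (ω l * l ^ 2) := by
                      apply mul_le_mul_of_nonneg_right _ (mul_nonneg hωl.le (by positivity))
                      apply mul_le_mul (by linarith) (by linarith) hM0 hS0.le
  constructor
  · -- L^∞ bound
    refine ⟨Msup, ?_⟩
    filter_upwards [hgg₀] with z hz
    show ‖g z‖ ≤ Msup
    rw [hz]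
    exact hg₀bdd z
  · -- BMO bound
    intro c l hl
    show ∫ z in Sq c l, ‖g z - avgOn g (Sq c l)‖ ≤
      2 * (cA + 1 + cC + cD) * (M + Msup) * (ω l * l ^ 2)
    obtain ⟨a, ha⟩ := hmain c l hl
    have hωl : 0 < ω l := hωpos l hl
    have hMM : 0 ≤ M + Msup := by linarith
    have hQmeas := sq_measurable c l
    have hQvol : volume (Sq c l) = ENNReal.ofReal l * ENNReal.ofReal l := sq_volume c l
    have hQ0 : volume (Sq c l) ≠ 0 := by
      rw [hQvol]
      simp only [ne_eq, mul_eq_zero, ENNReal.ofReal_eq_zero, not_or, not_le]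
      exact ⟨hl, hl⟩
    have hQfin : volume (Sq c l) ≠ ⊤ := by
      rw [hQvol]
      exact (ENNReal.mul_lt_top ENNReal.ofReal_lt_top ENNReal.ofReal_lt_top).ne
    have hg₀Q : AEMeasurable g₀ (volume.restrict (Sq c l)) :=
      hg₀meas.mono_measure Measure.restrict_le_self
    have hggQ : g =ᵐ[volume.restrict (Sq c l)] g₀ := ae_restrict_of_ae hgg₀
    have havg : avgOn g (Sq c l) = avgOn g₀ (Sq c l) := by
      rw [avgOn, avgOn, integral_congr_ae hggQ]
    have hnn : 0 ≤ᵐ[volume.restrict (Sq c l)]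
        fun z => ‖g z - avgOn g (Sq c l)‖ :=
      ae_of_all _ fun z => norm_nonneg _
    have hsm : AEStronglyMeasurable (fun z => ‖g z - avgOn g (Sq c l)‖)
        (volume.restrict (Sq c l)) := by
      have h1 : AEMeasurable (fun z => ‖g₀ z - avgOn g (Sq c l)‖)
          (volume.restrict (Sq c l)) :=
        continuous_norm.measurable.comp_aemeasurable (hg₀Q.sub aemeasurable_const)
      have h2 : (fun z => ‖g₀ z - avgOn g (Sq c l)‖) =ᵐ[volume.restrict (Sq c l)]
          (fun z => ‖g z - avgOn g (Sq c l)‖) := by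
        filter_upwards [hggQ] with z hz
        rw [hz]
      exact (h1.congr h2).aestronglyMeasurable
    have hRHS0 : (0:ℝ) ≤ 2 * (cA + 1 + cC + cD) * (M + Msup) * (ω l * l ^ 2) := by
      apply mul_nonneg (mul_nonneg (by linarith) hMM) (mul_nonneg hωl.le (by positivity))
    calc ∫ z in Sq c l, ‖g z - avgOn g (Sq c l)‖
        = (∫⁻ z in Sq c l, ENNReal.ofReal (‖g z - avgOn g (Sq c l)‖)).toReal :=
          integral_eq_lintegral_of_nonneg_ae hnn hsm
      _ ≤ 2 * (cA + 1 + cC + cD) * (M + Msup) * (ω l * l ^ 2) := by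
          apply ENNReal.toReal_le_of_le_ofReal hRHS0
          have hcongrL : ∫⁻ z in Sq c l, ENNReal.ofReal (‖g z - avgOn g (Sq c l)‖)
              = ∫⁻ z in Sq c l, ENNReal.ofReal (‖g₀ z - avgOn g₀ (Sq c l)‖) := by
            apply lintegral_congr_ae
            filter_upwards [hggQ] with z hz
            rw [hz, havg]
          rw [hcongrL]
          calc ∫⁻ z in Sq c l, ENNReal.ofReal (‖g₀ z - avgOn g₀ (Sq c l)‖)
              ≤ 2 * ∫⁻ z in Sq c l, ENNReal.ofReal (‖g₀ z - a‖) :=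
                avg_replace hQ0 hQfin hg₀Q a
            _ ≤ 2 * ENNReal.ofReal ((cA + 1 + cC + cD) * (M + Msup) * (ω l * l ^ 2)) :=
                mul_le_mul_right ha _
            _ = ENNReal.ofReal (2 * (cA + 1 + cC + cD) * (M + Msup) * (ω l * l ^ 2)) := by
                rw [show (2:ℝ≥0∞) = ENNReal.ofReal 2 by norm_num,
                  ← ENNReal.ofReal_mul (by norm_num)]
                congr 1
                ring






end
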